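/- arXiv:1810.01053 — 5 statements merged into one kernel-verified Lean document; each statement's English description precedes it below -/
import Mathlib

section
/- Let (s_k)_{k≥0} be a nondecreasing sequence of nonnegative real numbers, let (v_k)_{k≥0} and (α_i)_{i≥1} be sequences of nonnegative real numbers, and assume v₀² ≤ s₀. If for every k ≥ 0 one has v_k² ≤ s_k + Σ_{i=1}^{k} α_i v_i, then for every k ≥ 0, v_k ≤ (1/2)·Σ_{i=1}^{k} α_i + sqrt( ((1/2)·Σ_{i=1}^{k} α_i)² + s_k ). -/
/-!
Fix `k` and apply the hypothesis at an index `m ≤ k` where `v` is maximal on `[0, k]`. Since `s`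
is monotone and `v i ≤ v m` for `i ≤ k`, this gives `v m ² ≤ s k + (∑ α) v m`, a quadratic
inequality whose solution set is bounded by the larger root `A + √(A² + s k)`, `A = (∑ α) / 2`;
and `v k ≤ v m`.
-/

open Finset

lemma le_add_sqrt_of_sq_le_add_mul {x A S : ℝ} (h : x ^ 2 ≤ S + 2 * A * x) :
    x ≤ A + √(A ^ 2 + S) := by
  have hsq : (x - A) ^ 2 ≤ A ^ 2 + S := by nlinarith
  have : x - A ≤ √(A ^ 2 + S) :=
    calc x - A ≤ |x - A| := le_abs_self _
      _ = √((x - A) ^ 2) := (Real.sqrt_sq_eq_abs _).symm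
      _ ≤ √(A ^ 2 + S) := Real.sqrt_le_sqrt hsq
  linarith

lemma sum_Icc_mul_le_sum_mul_of_forall_le {α v : ℕ → ℝ} (hα : ∀ i, 0 ≤ α i)
    (hv : ∀ i, 0 ≤ v i) {m k : ℕ} (hmk : m ≤ k) (hmax : ∀ i ≤ k, v i ≤ v m) :
    ∑ i ∈ Icc 1 m, α i * v i ≤ (∑ i ∈ Icc 1 k, α i) * v m :=
  calc ∑ i ∈ Icc 1 m, α i * v i ≤ ∑ i ∈ Icc 1 k, α i * v i :=
        sum_le_sum_of_subset_of_nonneg (Icc_subset_Icc_right hmk)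
          fun i _ _ ↦ mul_nonneg (hα i) (hv i)
    _ ≤ ∑ i ∈ Icc 1 k, α i * v m :=
        sum_le_sum fun i hi ↦ mul_le_mul_of_nonneg_left (hmax i (mem_Icc.mp hi).2) (hα i)
    _ = (∑ i ∈ Icc 1 k, α i) * v m := (sum_mul ..).symm

theorem stmt1_general (s v α : ℕ → ℝ)
    (hsmono : Monotone s)
    (hv : ∀ k, 0 ≤ v k) (hα : ∀ i, 0 ≤ α i)
    (hrec : ∀ k, v k ^ 2 ≤ s k + ∑ i ∈ Finset.Icc 1 k, α i * v i) :
    ∀ k, v k ≤ (1 / 2) * (∑ i ∈ Finset.Icc 1 k, α i) +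
      Real.sqrt (((1 / 2) * ∑ i ∈ Finset.Icc 1 k, α i) ^ 2 + s k) := by
  intro k
  obtain ⟨m, hmk, hmax⟩ := exists_max_image (Iic k) v ⟨0, mem_Iic.mpr k.zero_le⟩
  rw [mem_Iic] at hmk
  replace hmax : ∀ i ≤ k, v i ≤ v m := fun i hi ↦ hmax i (mem_Iic.mpr hi)
  have hquad : v m ^ 2 ≤ s k + 2 * ((1 / 2) * ∑ i ∈ Icc 1 k, α i) * v m :=
    calc v m ^ 2 ≤ s m + ∑ i ∈ Icc 1 m, α i * v i := hrec m
      _ ≤ s k + (∑ i ∈ Icc 1 k, α i) * v m :=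
        add_le_add (hsmono hmk) (sum_Icc_mul_le_sum_mul_of_forall_le hα hv hmk hmax)
      _ = _ := by ring
  exact (hmax k le_rfl).trans (le_add_sqrt_of_sq_le_add_mul hquad)

theorem stmt1 (s v α : ℕ → ℝ)
    (hs0 : ∀ k, 0 ≤ s k) (hsmono : Monotone s)
    (hv : ∀ k, 0 ≤ v k) (hα : ∀ i, 0 ≤ α i)
    (h0 : v 0 ^ 2 ≤ s 0)
    (hrec : ∀ k, v k ^ 2 ≤ s k + ∑ i ∈ Finset.Icc 1 k, α i * v i) :
    ∀ k, v k ≤ (1 / 2) * (∑ i ∈ Finset.Icc 1 k, α i) +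
      Real.sqrt (((1 / 2) * ∑ i ∈ Finset.Icc 1 k, α i) ^ 2 + s k) :=
  stmt1_general s v α hsmono hv hα hrec
end

section
/- Let L, β₀, ϑ, ε > 0 and z ∈ ℝ^{m×n}. Suppose ẑ ∈ ℝ^{m×n} satisfies ‖ẑ − (1/m)11ᵀz‖²_F ≤ 2ϑε/β₀, and set x⁺ = (Lϑ·z + β₀·ẑ)/(Lϑ + β₀). Then (L/2)‖x⁺ − z‖²_F + (β₀/(2ϑ))‖Πx⁺‖²_F ≤ min_{x ∈ ℝ^{m×n}} [ (L/2)‖x − z‖²_F + (β₀/(2ϑ))‖Πx‖²_F ] + ε. -/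
open scoped RealInnerProductSpace

/-- The column-average operator `x ↦ (1/m)·1 1ᵀ x` on `ℝ^{m×n}`
(viewed as a Euclidean space with the Frobenius inner product). -/
noncomputable def colAvg (m n : ℕ) (x : EuclideanSpace ℝ (Fin m × Fin n)) :
    EuclideanSpace ℝ (Fin m × Fin n) :=
  WithLp.toLp 2 (fun p : Fin m × Fin n => (m : ℝ)⁻¹ * ∑ k : Fin m, x (k, p.2))

/-- The operator `Π = I − (1/m)·1 1ᵀ` acting on `ℝ^{m×n}`. -/
noncomputable def cProj (m n : ℕ) (x : EuclideanSpace ℝ (Fin m × Fin n)) :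
    EuclideanSpace ℝ (Fin m × Fin n) :=
  x - colAvg m n x

/-!
The objective `f x = (L/2)‖x - z‖² + b‖Πx‖²` (with `b = β₀/(2ϑ)`) is quadratic and `Π` is a
symmetric projection, so around its stationary point `y = z - c Πz`, `c = β₀/(Lϑ + β₀)`, it
expands exactly as `f (y + d) = f y + (L/2)‖d‖² + b‖Πd‖²`. Hence `y` is the minimiser and
`f (y + d) ≤ min f + (L/2 + b)‖d‖²`. Since `x⁺ = y + c (ẑ - (1/m)11ᵀz)`, the hypothesis on `ẑ`
makes the excess at most `(L/2 + b) c² · 2ϑε/β₀ = c ε ≤ ε`.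
-/

namespace LinearMap.IsSymmetricProjection

variable {𝕜 E : Type*} [RCLike 𝕜] [NormedAddCommGroup E] [InnerProductSpace 𝕜 E]
  {P : E →ₗ[𝕜] E}

theorem inner_map_map (hP : P.IsSymmetricProjection) (x y : E) :
    inner 𝕜 (P x) (P y) = inner 𝕜 (P x) y := by
  rw [← hP.isSymmetric, ← Module.End.mul_apply, hP.isIdempotentElem.eq]

theorem norm_map_le (hP : P.IsSymmetricProjection) (x : E) : ‖P x‖ ≤ ‖x‖ := by
  have h : ‖P x‖ ^ 2 ≤ ‖P x‖ * ‖x‖ := by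
    rw [← inner_self_eq_norm_sq (𝕜 := 𝕜), hP.inner_map_map]
    exact (RCLike.re_le_norm _).trans (norm_inner_le_norm _ _)
  rcases (norm_nonneg (P x)).eq_or_lt with h0 | hpos
  · rw [← h0]; exact norm_nonneg x
  · exact le_of_mul_le_mul_left (by rwa [sq] at h) hpos

end LinearMap.IsSymmetricProjection

section PenalizedObjective

variable {E : Type*} [NormedAddCommGroup E] [InnerProductSpace ℝ E]

noncomputable def penalizedDistSq (P : E →ₗ[ℝ] E) (L b : ℝ) (z x : E) : ℝ :=
  L / 2 * ‖x - z‖ ^ 2 + b * ‖P x‖ ^ 2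

variable {P : E →ₗ[ℝ] E} {L b : ℝ} {z y : E}

theorem stationary_sub_smul_map (hP : P.IsSymmetricProjection) {c : ℝ}
    (hc : 2 * b * (1 - c) = L * c) (z : E) :
    L • ((z - c • P z) - z) + (2 * b) • P (z - c • P z) = 0 := by
  have hPP : P (P z) = P z := by rw [← Module.End.mul_apply, hP.isIdempotentElem.eq]
  rw [map_sub, map_smul, hPP]
  linear_combination (norm := module) hc • P z

theorem penalizedDistSq_add_of_stationary (hP : P.IsSymmetricProjection)
    (hy : L • (y - z) + (2 * b) • P y = 0) (d : E) :
    penalizedDistSq P L b z (y + d) =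
      penalizedDistSq P L b z y + L / 2 * ‖d‖ ^ 2 + b * ‖P d‖ ^ 2 := by
  have hcross : L * ⟪y - z, d⟫ + 2 * b * ⟪P y, d⟫ = 0 := by
    simpa [inner_add_left, real_inner_smul_left] using congr(⟪$hy, d⟫)
  have hsplit : y + d - z = (y - z) + d := by abel
  simp only [penalizedDistSq, hsplit, map_add, norm_add_sq_real, hP.inner_map_map]
  linear_combination hcross

theorem penalizedDistSq_add_le_of_stationary (hP : P.IsSymmetricProjection) (hL : 0 ≤ L)
    (hb : 0 ≤ b) (hy : L • (y - z) + (2 * b) • P y = 0) (d x : E) :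
    penalizedDistSq P L b z (y + d) ≤ penalizedDistSq P L b z x + (L / 2 + b) * ‖d‖ ^ 2 := by
  have hmin : penalizedDistSq P L b z y ≤ penalizedDistSq P L b z x := by
    rw [← add_sub_cancel y x, penalizedDistSq_add_of_stationary hP hy, add_assoc]
    exact le_add_of_nonneg_right (by positivity)
  have hPd : b * ‖P d‖ ^ 2 ≤ b * ‖d‖ ^ 2 :=
    mul_le_mul_of_nonneg_left (pow_le_pow_left₀ (norm_nonneg _) (hP.norm_map_le d) 2) hb
  rw [penalizedDistSq_add_of_stationary hP hy]
  linarith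

end PenalizedObjective

theorem mul_norm_smul_sq_le_of_norm_sq_le {E : Type*} [NormedAddCommGroup E] [NormedSpace ℝ E]
    {L β₀ ϑ ε : ℝ} (hL : 0 < L) (hβ₀ : 0 < β₀) (hϑ : 0 < ϑ) (hε : 0 ≤ ε) {w : E}
    (hw : ‖w‖ ^ 2 ≤ 2 * ϑ * ε / β₀) :
    (L / 2 + β₀ / (2 * ϑ)) * ‖(β₀ / (L * ϑ + β₀)) • w‖ ^ 2 ≤ ε := by
  have hc1 : β₀ / (L * ϑ + β₀) ≤ 1 :=
    div_le_one_of_le₀ (le_add_of_nonneg_left (by positivity)) (by positivity)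
  calc (L / 2 + β₀ / (2 * ϑ)) * ‖(β₀ / (L * ϑ + β₀)) • w‖ ^ 2
        = (L / 2 + β₀ / (2 * ϑ)) * (β₀ / (L * ϑ + β₀)) ^ 2 * ‖w‖ ^ 2 := by
        rw [norm_smul, Real.norm_eq_abs, mul_pow, sq_abs]; ring
    _ ≤ (L / 2 + β₀ / (2 * ϑ)) * (β₀ / (L * ϑ + β₀)) ^ 2 * (2 * ϑ * ε / β₀) := by
        gcongr
    _ = β₀ / (L * ϑ + β₀) * ε := by field_simp
    _ ≤ ε := mul_le_of_le_one_left hε hc1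

section ColumnAverage

variable (m n : ℕ)

noncomputable def colAvgₗ :
    EuclideanSpace ℝ (Fin m × Fin n) →ₗ[ℝ] EuclideanSpace ℝ (Fin m × Fin n) where
  toFun := colAvg m n
  map_add' x y := by
    ext p
    simp [colAvg, Finset.sum_add_distrib, mul_add]
  map_smul' c x := by
    ext p
    simp [colAvg, Finset.mul_sum, mul_left_comm]

theorem colAvg_colAvg (x : EuclideanSpace ℝ (Fin m × Fin n)) :
    colAvg m n (colAvg m n x) = colAvg m n x := by
  ext p
  have hm : (m : ℝ) ≠ 0 := Nat.cast_ne_zero.mpr p.1.pos.ne'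
  simp [colAvg, hm]

theorem inner_colAvg_left_eq_right (x y : EuclideanSpace ℝ (Fin m × Fin n)) :
    ⟪colAvg m n x, y⟫ = ⟪x, colAvg m n y⟫ := by
  simp only [PiLp.inner_apply, RCLike.inner_apply, conj_trivial, Fintype.sum_prod_type]
  rw [Finset.sum_comm, Finset.sum_comm (γ := Fin m)]
  refine Finset.sum_congr rfl fun j _ => ?_
  simp only [colAvg, PiLp.toLp_apply, ← Finset.mul_sum, ← Finset.sum_mul]
  ring

theorem isSymmetricProjection_colAvgₗ : (colAvgₗ m n).IsSymmetricProjection where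
  isIdempotentElem := LinearMap.ext (colAvg_colAvg m n)
  isSymmetric := inner_colAvg_left_eq_right m n

noncomputable def cProjₗ :
    EuclideanSpace ℝ (Fin m × Fin n) →ₗ[ℝ] EuclideanSpace ℝ (Fin m × Fin n) :=
  1 - colAvgₗ m n

theorem cProjₗ_apply (x : EuclideanSpace ℝ (Fin m × Fin n)) : cProjₗ m n x = cProj m n x :=
  rfl

theorem isSymmetricProjection_cProjₗ : (cProjₗ m n).IsSymmetricProjection where
  isIdempotentElem := (isSymmetricProjection_colAvgₗ m n).isIdempotentElem.one_sub
  isSymmetric := LinearMap.IsSymmetric.one.sub (isSymmetricProjection_colAvgₗ m n).isSymmetric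

end ColumnAverage

theorem stmt3_general (m n : ℕ) (L β₀ ϑ ε : ℝ)
    (hL : 0 < L) (hβ₀ : 0 < β₀) (hϑ : 0 < ϑ) (hε : 0 < ε)
    (z zhat xplus : EuclideanSpace ℝ (Fin m × Fin n))
    (hzhat : ‖zhat - colAvg m n z‖ ^ 2 ≤ 2 * ϑ * ε / β₀)
    (hxp : xplus = (L * ϑ + β₀)⁻¹ • ((L * ϑ) • z + β₀ • zhat)) :
    ∀ x : EuclideanSpace ℝ (Fin m × Fin n),
      (L / 2) * ‖xplus - z‖ ^ 2 + (β₀ / (2 * ϑ)) * ‖cProj m n xplus‖ ^ 2 ≤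
        (L / 2) * ‖x - z‖ ^ 2 + (β₀ / (2 * ϑ)) * ‖cProj m n x‖ ^ 2 + ε := by
  intro x
  have hs : L * ϑ + β₀ ≠ 0 := by positivity
  have hbc :
      2 * (β₀ / (2 * ϑ)) * (1 - β₀ / (L * ϑ + β₀)) = L * (β₀ / (L * ϑ + β₀)) := by
    field_simp; ring
  have hxpc : (L * ϑ + β₀)⁻¹ * (L * ϑ) = 1 - β₀ / (L * ϑ + β₀) := by
    field_simp; ring
  set c := β₀ / (L * ϑ + β₀)
  have hxplus : xplus = (z - c • cProjₗ m n z) + c • (zhat - colAvg m n z) := by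
    rw [hxp, smul_add, smul_smul, smul_smul, hxpc, inv_mul_eq_div, cProjₗ_apply, cProj]
    module
  have hP := isSymmetricProjection_cProjₗ m n
  have key := penalizedDistSq_add_le_of_stationary hP hL.le (by positivity)
    (stationary_sub_smul_map hP hbc z) (c • (zhat - colAvg m n z)) x
  rw [← hxplus] at key
  exact key.trans
    (add_le_add_right (mul_norm_smul_sq_le_of_norm_sq_le hL hβ₀ hϑ hε.le hzhat) _)

theorem stmt3 (m n : ℕ) (hm : 0 < m) (L β₀ ϑ ε : ℝ)
    (hL : 0 < L) (hβ₀ : 0 < β₀) (hϑ : 0 < ϑ) (hε : 0 < ε)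
    (z zhat xplus : EuclideanSpace ℝ (Fin m × Fin n))
    (hzhat : ‖zhat - colAvg m n z‖ ^ 2 ≤ 2 * ϑ * ε / β₀)
    (hxp : xplus = (L * ϑ + β₀)⁻¹ • ((L * ϑ) • z + β₀ • zhat)) :
    ∀ x : EuclideanSpace ℝ (Fin m × Fin n),
      (L / 2) * ‖xplus - z‖ ^ 2 + (β₀ / (2 * ϑ)) * ‖cProj m n xplus‖ ^ 2 ≤
        (L / 2) * ‖x - z‖ ^ 2 + (β₀ / (2 * ϑ)) * ‖cProj m n x‖ ^ 2 + ε :=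
  stmt3_general m n L β₀ ϑ ε hL hβ₀ hϑ hε z zhat xplus hzhat hxp
end

section
/- Let f : ℝ^{m×n} → ℝ be convex and differentiable with gradient ∇f, let β > 0 and ε ≥ 0, and let (x*, λ*) satisfy Πx* = 0 and ∇f(x*) + Πλ* = 0. Suppose x ∈ ℝ^{m×n} is an ε-accurate solution of the penalized problem, i.e. f(x) + (β/2)‖Πx‖²_F ≤ inf_{y ∈ ℝ^{m×n}} [ f(y) + (β/2)‖Πy‖²_F ] + ε. Then ‖Πx‖_F ≤ 2‖λ*‖_F/β + √(2ε/β), and −‖λ*‖_F·‖Πx‖_F ≤ f(x) − f(x*) ≤ ε. -/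
/-
Since `Π x* = 0`, testing the `ε`-optimality of `x` against `x*` gives
`f(x) + (β/2)‖Πx‖² ≤ f(x*) + ε`, which is the upper bound. Convexity at `x*`, where
`∇f(x*) = −Πλ*` and `Π` is symmetric, gives `f(x) ≥ f(x*) − ⟨λ*, Πx⟩ ≥ f(x*) − ‖λ*‖‖Πx‖`,
the lower bound. Combining the two, `t = ‖Πx‖` satisfies `(β/2)t² ≤ ε + ‖λ*‖t`, and solving
this quadratic inequality bounds `t`.
-/

open scoped RealInnerProductSpace

theorem ConvexOn.add_fderiv_le {E : Type*} [NormedAddCommGroup E] [NormedSpace ℝ E]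
    {f : E → ℝ} {f' : E →L[ℝ] ℝ} {a : E} (hf : ConvexOn ℝ Set.univ f)
    (hf' : HasFDerivAt f f' a) (b : E) : f a + f' (b - a) ≤ f b := by
  set c : ℝ →ᵃ[ℝ] E := AffineMap.lineMap a b
  have hderiv : HasDerivAt (f ∘ c) (f' (b - a)) 0 :=
    (by simpa [c] using hf' : HasFDerivAt f f' (c 0)).comp_hasDerivAt 0
      AffineMap.hasDerivAt_lineMap
  have hslope := (hf.comp_affineMap c).le_slope_of_hasDerivAt (Set.mem_univ 0)
    (Set.mem_univ 1) one_pos hderiv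
  simpa [slope_def_field, c, le_sub_iff_add_le'] using hslope

section InnerProductSpace

variable {E : Type*} [NormedAddCommGroup E] [InnerProductSpace ℝ E] [CompleteSpace E]
  {f : E → ℝ}

theorem ConvexOn.add_inner_le_of_hasGradientAt {g a : E} (hf : ConvexOn ℝ Set.univ f)
    (hg : HasGradientAt f g a) (b : E) : f a + ⟪g, b - a⟫ ≤ f b :=
  hf.add_fderiv_le hg b

theorem ConvexOn.sub_norm_mul_norm_le_of_hasGradientAt {P : E →ₗ[ℝ] E} (hP : P.IsSymmetric)
    {xs lam : E} (hf : ConvexOn ℝ Set.univ f) (hg : HasGradientAt f (-P lam) xs)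
    (hxs : P xs = 0) (x : E) : f xs - ‖lam‖ * ‖P x‖ ≤ f x := by
  have htangent := hf.add_inner_le_of_hasGradientAt hg x
  have hinner : ⟪-P lam, x - xs⟫ = -⟪lam, P x⟫ := by
    rw [inner_neg_left, hP, map_sub, hxs, sub_zero]
  linarith [real_inner_le_norm lam (P x)]

end InnerProductSpace

theorem le_div_add_sqrt_of_half_mul_sq_le {β ε L t : ℝ} (hβ : 0 < β) (hε : 0 ≤ ε) (hL : 0 ≤ L)
    (h : β / 2 * t ^ 2 ≤ ε + L * t) : t ≤ 2 * L / β + Real.sqrt (2 * ε / β) := by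
  set s := Real.sqrt (2 * ε / β)
  have hs : β * s ^ 2 = 2 * ε := by
    rw [Real.sq_sqrt (by positivity)]
    field_simp
  by_contra! hlt
  have hβt : 2 * L + β * s < β * t := by
    rw [← mul_lt_mul_iff_right₀ hβ] at hlt
    rwa [mul_add, mul_div_cancel₀ _ hβ.ne'] at hlt
  have hL' : 0 ≤ 2 * L / β := by positivity
  have hs0 : 0 ≤ s := Real.sqrt_nonneg _
  have hst : s ≤ t := by linarith
  have ht : 0 < t := by linarith
  nlinarith [mul_lt_mul_of_pos_right hβt ht, mul_le_mul_of_nonneg_left hst (mul_nonneg hβ.le hs0)]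

noncomputable def colAvgLinear (m n : ℕ) :
    EuclideanSpace ℝ (Fin m × Fin n) →ₗ[ℝ] EuclideanSpace ℝ (Fin m × Fin n) where
  toFun := colAvg m n
  map_add' a b := by
    ext p
    simp only [colAvg, PiLp.add_apply, PiLp.toLp_apply, Finset.sum_add_distrib]
    ring
  map_smul' c a := by
    ext p
    simp only [colAvg, PiLp.smul_apply, PiLp.toLp_apply, smul_eq_mul, RingHom.id_apply,
      ← Finset.mul_sum]
    ring

theorem inner_colAvg_left (m n : ℕ) (a b : EuclideanSpace ℝ (Fin m × Fin n)) :
    ⟪colAvg m n a, b⟫ =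
      (m : ℝ)⁻¹ * ∑ j : Fin n, (∑ k : Fin m, a (k, j)) * ∑ i : Fin m, b (i, j) := by
  simp only [PiLp.inner_apply, RCLike.inner_apply, conj_trivial, colAvg]
  rw [Fintype.sum_prod_type, Finset.sum_comm, Finset.mul_sum]
  refine Finset.sum_congr rfl fun j _ => ?_
  dsimp only
  rw [← Finset.sum_mul]
  ring

theorem colAvgLinear_isSymmetric (m n : ℕ) : (colAvgLinear m n).IsSymmetric := by
  intro a b
  change ⟪colAvg m n a, b⟫ = ⟪a, colAvg m n b⟫
  rw [real_inner_comm (colAvg m n b), inner_colAvg_left, inner_colAvg_left]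
  exact congrArg _ (Finset.sum_congr rfl fun j _ => mul_comm _ _)

noncomputable def cProjLinear (m n : ℕ) :
    EuclideanSpace ℝ (Fin m × Fin n) →ₗ[ℝ] EuclideanSpace ℝ (Fin m × Fin n) :=
  LinearMap.id - colAvgLinear m n

theorem cProjLinear_isSymmetric (m n : ℕ) : (cProjLinear m n).IsSymmetric :=
  LinearMap.IsSymmetric.id.sub (colAvgLinear_isSymmetric m n)

theorem stmt12_general (m n : ℕ)
    (f : EuclideanSpace ℝ (Fin m × Fin n) → ℝ)
    (gf : EuclideanSpace ℝ (Fin m × Fin n) → EuclideanSpace ℝ (Fin m × Fin n))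
    (hconv : ConvexOn ℝ Set.univ f)
    (hgrad : ∀ x, HasGradientAt f (gf x) x)
    (β ε : ℝ) (hβ : 0 < β)
    (xs lam : EuclideanSpace ℝ (Fin m × Fin n))
    (hxs : cProj m n xs = 0) (hlam : gf xs + cProj m n lam = 0)
    (x : EuclideanSpace ℝ (Fin m × Fin n))
    -- `x` is an `ε`-accurate solution of the penalized problem
    (hx : ∀ y, f x + (β / 2) * ‖cProj m n x‖ ^ 2 ≤ f y + (β / 2) * ‖cProj m n y‖ ^ 2 + ε) :
    ‖cProj m n x‖ ≤ 2 * ‖lam‖ / β + Real.sqrt (2 * ε / β) ∧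
    -‖lam‖ * ‖cProj m n x‖ ≤ f x - f xs ∧
    f x - f xs ≤ ε := by
  have hε : 0 ≤ ε := by simpa using hx x
  have hpenalty : f x + β / 2 * ‖cProj m n x‖ ^ 2 ≤ f xs + ε := by simpa [hxs] using hx xs
  have hlower : f xs - ‖lam‖ * ‖cProj m n x‖ ≤ f x := by
    have hgrad_xs := hgrad xs
    rw [eq_neg_of_add_eq_zero_left hlam] at hgrad_xs
    exact hconv.sub_norm_mul_norm_le_of_hasGradientAt (cProjLinear_isSymmetric m n) hgrad_xs hxs x
  have hsq : 0 ≤ β / 2 * ‖cProj m n x‖ ^ 2 := by positivity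
  exact ⟨le_div_add_sqrt_of_half_mul_sq_le hβ hε (norm_nonneg lam) (by linarith),
    by linarith, by linarith⟩

theorem stmt12 (m n : ℕ) (hm : 0 < m)
    (f : EuclideanSpace ℝ (Fin m × Fin n) → ℝ)
    (gf : EuclideanSpace ℝ (Fin m × Fin n) → EuclideanSpace ℝ (Fin m × Fin n))
    (hconv : ConvexOn ℝ Set.univ f)
    (hgrad : ∀ x, HasGradientAt f (gf x) x)
    (β ε : ℝ) (hβ : 0 < β) (hε : 0 ≤ ε)
    (xs lam : EuclideanSpace ℝ (Fin m × Fin n))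
    (hxs : cProj m n xs = 0) (hlam : gf xs + cProj m n lam = 0)
    (x : EuclideanSpace ℝ (Fin m × Fin n))
    -- `x` is an `ε`-accurate solution of the penalized problem
    (hx : ∀ y, f x + (β / 2) * ‖cProj m n x‖ ^ 2 ≤ f y + (β / 2) * ‖cProj m n y‖ ^ 2 + ε) :
    ‖cProj m n x‖ ≤ 2 * ‖lam‖ / β + Real.sqrt (2 * ε / β) ∧
    -‖lam‖ * ‖cProj m n x‖ ≤ f x - f xs ∧
    f x - f xs ≤ ε :=
  stmt12_general m n f gf hconv hgrad β ε hβ xs lam hxs hlam x hx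
end

section
/- Let f : ℝ^{m×n} → ℝ be convex and differentiable with gradient ∇f and L-smooth. Let x, x* ∈ ℝ^{m×n} with Πx* = 0, and let x̄ = (1/m)11ᵀx. Then f(x̄) − f(x*) ≤ (‖∇f(x*)‖_F + L‖x − x*‖_F)·‖Πx‖_F + (L/2)‖Πx‖²_F + f(x) − f(x*). -/
open scoped RealInnerProductSpace

/-!
Since `x̄ - x = -Πx`, the `L`-smoothness upper bound at `x` gives
`f x̄ ≤ f x + ‖∇f x‖ ‖Πx‖ + (L/2) ‖Πx‖²`. For a convex `L`-smooth function the gradient is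
co-coercive, `‖∇f b - ∇f a‖² ≤ L ⟪∇f b - ∇f a, b - a⟫`, hence `L`-Lipschitz, so
`‖∇f x‖ ≤ ‖∇f x*‖ + L ‖x - x*‖`.
-/

section SmoothConvex

variable {E : Type*} [NormedAddCommGroup E] [InnerProductSpace ℝ E] {L : ℝ} {f : E → ℝ}
  {gf : E → E}

theorem le_add_norm_grad_mul_add_sq
    (hsmooth : ∀ a b, f b ≤ f a + ⟪gf a, b - a⟫ + (L / 2) * ‖b - a‖ ^ 2) (a b : E) :
    f b ≤ f a + ‖gf a‖ * ‖b - a‖ + (L / 2) * ‖b - a‖ ^ 2 := by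
  linarith [hsmooth a b, real_inner_le_norm (gf a) (b - a)]

theorem sq_norm_grad_sub_div_le_bregman (hL : 0 < L)
    (hconv : ∀ a b, f a + ⟪gf a, b - a⟫ ≤ f b)
    (hsmooth : ∀ a b, f b ≤ f a + ⟪gf a, b - a⟫ + (L / 2) * ‖b - a‖ ^ 2) (a b : E) :
    ‖gf b - gf a‖ ^ 2 / (2 * L) ≤ f b - f a - ⟪gf a, b - a⟫ := by
  -- chain both bounds at the gradient step `b - L⁻¹ • g` taken from `b`
  set g := gf b - gf a
  have hstep := (hconv a (b - L⁻¹ • g)).trans (hsmooth b (b - L⁻¹ • g))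
  have hg : ⟪gf b, g⟫ - ⟪gf a, g⟫ = ‖g‖ ^ 2 := by
    rw [← inner_sub_left, real_inner_self_eq_norm_sq]
  rw [sub_sub_cancel_left, norm_neg, norm_smul, Real.norm_of_nonneg (inv_nonneg.2 hL.le),
    sub_right_comm, inner_sub_right, inner_neg_right, real_inner_smul_right,
    real_inner_smul_right] at hstep
  field_simp
  field_simp at hstep
  nlinarith

theorem sq_norm_grad_sub_le_mul_inner (hL : 0 < L)
    (hconv : ∀ a b, f a + ⟪gf a, b - a⟫ ≤ f b)
    (hsmooth : ∀ a b, f b ≤ f a + ⟪gf a, b - a⟫ + (L / 2) * ‖b - a‖ ^ 2) (a b : E) :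
    ‖gf b - gf a‖ ^ 2 ≤ L * ⟪gf b - gf a, b - a⟫ := by
  have hab := sq_norm_grad_sub_div_le_bregman hL hconv hsmooth a b
  have hba := sq_norm_grad_sub_div_le_bregman hL hconv hsmooth b a
  rw [norm_sub_rev, ← neg_sub b a, inner_neg_right] at hba
  have hsplit : ‖gf b - gf a‖ ^ 2 / L =
      ‖gf b - gf a‖ ^ 2 / (2 * L) + ‖gf b - gf a‖ ^ 2 / (2 * L) := by
    field_simp; ring
  rw [inner_sub_left, ← div_le_iff₀' hL]
  linarith

theorem norm_grad_sub_le (hL : 0 < L)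
    (hconv : ∀ a b, f a + ⟪gf a, b - a⟫ ≤ f b)
    (hsmooth : ∀ a b, f b ≤ f a + ⟪gf a, b - a⟫ + (L / 2) * ‖b - a‖ ^ 2) (a b : E) :
    ‖gf b - gf a‖ ≤ L * ‖b - a‖ := by
  rcases (norm_nonneg (gf b - gf a)).eq_or_lt with h | h
  · rw [← h]; positivity
  refine le_of_mul_le_mul_right ?_ h
  calc ‖gf b - gf a‖ * ‖gf b - gf a‖ = ‖gf b - gf a‖ ^ 2 := (sq _).symm
    _ ≤ L * ⟪gf b - gf a, b - a⟫ := sq_norm_grad_sub_le_mul_inner hL hconv hsmooth a b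
    _ ≤ L * (‖gf b - gf a‖ * ‖b - a‖) := by gcongr; exact real_inner_le_norm _ _
    _ = L * ‖b - a‖ * ‖gf b - gf a‖ := by ring

end SmoothConvex

theorem stmt14_general (m n : ℕ) (L : ℝ) (hL : 0 < L)
    (f : EuclideanSpace ℝ (Fin m × Fin n) → ℝ)
    (gf : EuclideanSpace ℝ (Fin m × Fin n) → EuclideanSpace ℝ (Fin m × Fin n))
    -- `f` is convex with gradient `gf`
    (hconv : ∀ a b, f a + ⟪gf a, b - a⟫ ≤ f b)
    -- `f` is `L`-smooth with gradient `gf`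
    (hsmooth : ∀ a b, f b ≤ f a + ⟪gf a, b - a⟫ + (L / 2) * ‖b - a‖ ^ 2)
    (x xs : EuclideanSpace ℝ (Fin m × Fin n)) :
    f (colAvg m n x) - f xs ≤
      (‖gf xs‖ + L * ‖x - xs‖) * ‖cProj m n x‖ + (L / 2) * ‖cProj m n x‖ ^ 2
        + f x - f xs := by
  have hstep : ‖colAvg m n x - x‖ = ‖cProj m n x‖ := norm_sub_rev _ _
  have hgrad : ‖gf x‖ ≤ ‖gf xs‖ + L * ‖x - xs‖ :=
    (norm_le_norm_add_norm_sub' (gf x) (gf xs)).trans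
      (by gcongr; exact norm_grad_sub_le hL hconv hsmooth xs x)
  have hdescent := le_add_norm_grad_mul_add_sq hsmooth x (colAvg m n x)
  rw [hstep] at hdescent
  linarith [mul_le_mul_of_nonneg_right hgrad (norm_nonneg (cProj m n x))]

theorem stmt14 (m n : ℕ) (hm : 0 < m) (L : ℝ) (hL : 0 < L)
    (f : EuclideanSpace ℝ (Fin m × Fin n) → ℝ)
    (gf : EuclideanSpace ℝ (Fin m × Fin n) → EuclideanSpace ℝ (Fin m × Fin n))
    -- `f` is convex with gradient `gf`
    (hconv : ∀ a b, f a + ⟪gf a, b - a⟫ ≤ f b)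
    -- `f` is `L`-smooth with gradient `gf`
    (hsmooth : ∀ a b, f b ≤ f a + ⟪gf a, b - a⟫ + (L / 2) * ‖b - a‖ ^ 2)
    (x xs : EuclideanSpace ℝ (Fin m × Fin n))
    (hxs : cProj m n xs = 0) :
    f (colAvg m n x) - f xs ≤
      (‖gf xs‖ + L * ‖x - xs‖) * ‖cProj m n x‖ + (L / 2) * ‖cProj m n x‖ ^ 2
        + f x - f xs :=
  stmt14_general m n L hL f gf hconv hsmooth x xs
end

section
/- Let f : ℝ^{m×n} → ℝ be differentiable with an L-Lipschitz gradient ∇f (i.e. ‖∇f(a) − ∇f(b)‖_F ≤ L‖a − b‖_F for all a, b, with L > 0), let x* ∈ ℝ^{m×n} satisfy Πx* = 0, let 0 ≤ c ≤ 1, and let x, x' ∈ ℝ^{m×n}. Set y = x' + c(x' − x) and z = y − (1/L)∇f(y). Then ‖Πz‖_F ≤ (1/L)‖∇f(x*)‖_F + 4‖x' − x*‖_F + 2‖x − x*‖_F. -/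
open scoped RealInnerProductSpace

/-!
Since `Π xs = 0` and `Π` is linear, `Π z = Π (z - xs)`, and `Π` is a contraction because it is
the orthogonal projection complementary to the column average. It remains to bound `‖z - xs‖`:
the Lipschitz gradient gives `‖∇f y‖ ≤ ‖∇f xs‖ + L ‖y - xs‖`, so the gradient step moves at most
`L⁻¹ ‖∇f xs‖ + ‖y - xs‖`, and the extrapolation with `0 ≤ c ≤ 1` gives
`‖y - xs‖ ≤ 2 ‖x' - xs‖ + ‖x - xs‖`.
-/

section GradientStep

variable {E : Type*} [SeminormedAddCommGroup E] [NormedSpace ℝ E]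

theorem norm_extrapolate_sub_le {c : ℝ} (hc0 : 0 ≤ c) (hc1 : c ≤ 1) (x x' xs : E) :
    ‖x' + c • (x' - x) - xs‖ ≤ 2 * ‖x' - xs‖ + ‖x - xs‖ := by
  have hsplit : x' + c • (x' - x) - xs = (x' - xs) + c • ((x' - xs) - (x - xs)) := by module
  calc ‖x' + c • (x' - x) - xs‖
      ≤ ‖x' - xs‖ + c * ‖(x' - xs) - (x - xs)‖ := by
        rw [hsplit]
        exact (norm_add_le _ _).trans_eq (by rw [norm_smul, Real.norm_of_nonneg hc0])
    _ ≤ ‖x' - xs‖ + 1 * (‖x' - xs‖ + ‖x - xs‖) := by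
        gcongr
        exact norm_sub_le _ _
    _ = 2 * ‖x' - xs‖ + ‖x - xs‖ := by ring

theorem norm_gradient_step_sub_le {L : ℝ} (hL : 0 < L) {g : E → E}
    (hlip : ∀ a b, ‖g a - g b‖ ≤ L * ‖a - b‖) (y xs : E) :
    ‖y - L⁻¹ • g y - xs‖ ≤ L⁻¹ * ‖g xs‖ + 2 * ‖y - xs‖ := by
  have hg : ‖g y‖ ≤ ‖g xs‖ + L * ‖y - xs‖ := by
    linarith [norm_le_norm_add_norm_sub' (g y) (g xs), hlip y xs]
  calc ‖y - L⁻¹ • g y - xs‖ = ‖(y - xs) - L⁻¹ • g y‖ := by rw [sub_right_comm]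
    _ ≤ ‖y - xs‖ + L⁻¹ * ‖g y‖ :=
        (norm_sub_le _ _).trans_eq (by rw [norm_smul, Real.norm_of_nonneg (inv_nonneg.mpr hL.le)])
    _ ≤ ‖y - xs‖ + L⁻¹ * (‖g xs‖ + L * ‖y - xs‖) := by gcongr
    _ = L⁻¹ * ‖g xs‖ + 2 * ‖y - xs‖ := by field_simp; ring

end GradientStep

section ConsensusProjection

variable {m n : ℕ}

theorem cProj_sub (a b : EuclideanSpace ℝ (Fin m × Fin n)) :
    cProj m n (a - b) = cProj m n a - cProj m n b := by
  ext p
  simp only [cProj, colAvg, PiLp.sub_apply, Finset.sum_sub_distrib, mul_sub]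
  ring

theorem sum_cProj_apply (x : EuclideanSpace ℝ (Fin m × Fin n)) (j : Fin n) :
    ∑ k : Fin m, cProj m n x (k, j) = 0 := by
  rcases Nat.eq_zero_or_pos m with rfl | hm
  · simp
  simp only [cProj, colAvg, PiLp.sub_apply, Finset.sum_sub_distrib,
    Finset.sum_const, Finset.card_univ, Fintype.card_fin, nsmul_eq_mul]
  rw [mul_inv_cancel_left₀ (Nat.cast_ne_zero.mpr hm.ne'), sub_self]

theorem inner_colAvg_cProj (x : EuclideanSpace ℝ (Fin m × Fin n)) :
    ⟪colAvg m n x, cProj m n x⟫ = 0 := by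
  simp only [PiLp.inner_apply, RCLike.inner_apply, conj_trivial, Fintype.sum_prod_type_right]
  refine Finset.sum_eq_zero fun j _ => ?_
  simp only [colAvg, PiLp.toLp_apply, ← Finset.sum_mul, sum_cProj_apply, zero_mul]

theorem norm_cProj_le (x : EuclideanSpace ℝ (Fin m × Fin n)) : ‖cProj m n x‖ ≤ ‖x‖ := by
  have hpyth := norm_add_sq_eq_norm_sq_add_norm_sq_real (inner_colAvg_cProj x)
  have hdecomp : colAvg m n x + cProj m n x = x := add_sub_cancel _ _
  rw [hdecomp] at hpyth
  refine (mul_self_le_mul_self_iff (norm_nonneg _) (norm_nonneg _)).mpr ?_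
  rw [hpyth]
  exact le_add_of_nonneg_left (mul_self_nonneg _)

end ConsensusProjection

theorem stmt18_general (m n : ℕ) (L : ℝ) (hL : 0 < L)
    (gf : EuclideanSpace ℝ (Fin m × Fin n) → EuclideanSpace ℝ (Fin m × Fin n))
    -- `gf` (the gradient of `f`) is `L`-Lipschitz
    (hlip : ∀ a b, ‖gf a - gf b‖ ≤ L * ‖a - b‖)
    (xs : EuclideanSpace ℝ (Fin m × Fin n)) (hxs : cProj m n xs = 0)
    (c : ℝ) (hc0 : 0 ≤ c) (hc1 : c ≤ 1)
    (x x' y z : EuclideanSpace ℝ (Fin m × Fin n))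
    (hy : y = x' + c • (x' - x))
    (hz : z = y - L⁻¹ • gf y) :
    ‖cProj m n z‖ ≤ L⁻¹ * ‖gf xs‖ + 4 * ‖x' - xs‖ + 2 * ‖x - xs‖ := by
  have hextra : ‖y - xs‖ ≤ 2 * ‖x' - xs‖ + ‖x - xs‖ :=
    hy ▸ norm_extrapolate_sub_le hc0 hc1 x x' xs
  calc ‖cProj m n z‖ = ‖cProj m n (z - xs)‖ := by rw [cProj_sub, hxs, sub_zero]
    _ ≤ ‖z - xs‖ := norm_cProj_le _
    _ ≤ L⁻¹ * ‖gf xs‖ + 2 * ‖y - xs‖ := hz ▸ norm_gradient_step_sub_le hL hlip y xs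
    _ ≤ L⁻¹ * ‖gf xs‖ + 4 * ‖x' - xs‖ + 2 * ‖x - xs‖ := by linarith

theorem stmt18 (m n : ℕ) (hm : 0 < m) (L : ℝ) (hL : 0 < L)
    (f : EuclideanSpace ℝ (Fin m × Fin n) → ℝ)
    (gf : EuclideanSpace ℝ (Fin m × Fin n) → EuclideanSpace ℝ (Fin m × Fin n))
    -- `gf` (the gradient of `f`) is `L`-Lipschitz
    (hlip : ∀ a b, ‖gf a - gf b‖ ≤ L * ‖a - b‖)
    (xs : EuclideanSpace ℝ (Fin m × Fin n)) (hxs : cProj m n xs = 0)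
    (c : ℝ) (hc0 : 0 ≤ c) (hc1 : c ≤ 1)
    (x x' y z : EuclideanSpace ℝ (Fin m × Fin n))
    (hy : y = x' + c • (x' - x))
    (hz : z = y - L⁻¹ • gf y) :
    ‖cProj m n z‖ ≤ L⁻¹ * ‖gf xs‖ + 4 * ‖x' - xs‖ + 2 * ‖x - xs‖ :=
  stmt18_general m n L hL gf hlip xs hxs c hc0 hc1 x x' y z hy hz
end
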